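/- A (one-pass tree-shaped) tableau for an LTLfMT formula φ (without the PRUNE rule) contains an accepted branch if and only if φ is satisfiable. -/

import Mathlib

namespace LTLfMT

/-- A first-order (mono-sorted rendering of a multi-sorted) signature
`Σ = ⟨S, P, F, V, W⟩` with predicate symbols `P`, function symbols `F`,
a finite nonempty set `V` of data variables and a disjoint set `W` of
quantification variables. -/
structure Signature : Type 1 where
  P : Type
  F : Type
  V : Type
  W : Type
  finV : Fintype V
  neV : Nonempty V
  decV : DecidableEq V
  decW : DecidableEq W

attribute [instance] Signature.finV Signature.neV Signature.decV Signature.decW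

variable {σ : Signature}

mutual
/-- Terms: data variables `v`, quantification variables `w`, next `◦v`,
weak next `~◦v`, and function applications. -/
inductive Tm (σ : Signature) : Type
  | var : σ.V → Tm σ
  | qvar : σ.W → Tm σ
  | nxt : σ.V → Tm σ
  | wnxt : σ.V → Tm σ
  | app : σ.F → TmList σ → Tm σ
inductive TmList (σ : Signature) : Type
  | nil : TmList σ
  | cons : Tm σ → TmList σ → TmList σ
end

mutual
/-- Does a term contain a next (`◦`) subterm? -/
def Tm.hasNxt : Tm σ → Bool
  | .var _ => false
  | .qvar _ => false
  | .nxt _ => true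
  | .wnxt _ => false
  | .app _ ts => TmList.hasNxt ts
def TmList.hasNxt : TmList σ → Bool
  | .nil => false
  | .cons t ts => Tm.hasNxt t || TmList.hasNxt ts
end

mutual
/-- Does a term contain a weak-next (`~◦`) subterm? -/
def Tm.hasWnxt : Tm σ → Bool
  | .var _ => false
  | .qvar _ => false
  | .nxt _ => false
  | .wnxt _ => true
  | .app _ ts => TmList.hasWnxt ts
def TmList.hasWnxt : TmList σ → Bool
  | .nil => false
  | .cons t ts => Tm.hasWnxt t || TmList.hasWnxt ts
end

mutual
/-- The quantification variables (from `W`) occurring in a term. -/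
def Tm.wvars : Tm σ → Set σ.W
  | .var _ => ∅
  | .qvar w => {w}
  | .nxt _ => ∅
  | .wnxt _ => ∅
  | .app _ ts => TmList.wvars ts
def TmList.wvars : TmList σ → Set σ.W
  | .nil => ∅
  | .cons t ts => Tm.wvars t ∪ TmList.wvars ts
end

mutual
/-- The indexed ("stepped") data variables mentioned by a term occurring in
the `j`-th constraint: `v` yields `v^j`, while `◦v`, `~◦v` yield `v^(j+1)`. -/
def Tm.ivars (j : ℕ) : Tm σ → Set (ℕ × σ.V)
  | .var v => {(j, v)}
  | .qvar _ => ∅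
  | .nxt v => {(j+1, v)}
  | .wnxt v => {(j+1, v)}
  | .app _ ts => TmList.ivars j ts
def TmList.ivars (j : ℕ) : TmList σ → Set (ℕ × σ.V)
  | .nil => ∅
  | .cons t ts => Tm.ivars j t ∪ TmList.ivars j ts
end

/-- First-order formulas `λ` (in negation normal form), built from (possibly
negated) atoms — including built-in equality atoms and the fresh nullary
predicate `ℓ` used in the tableau machinery — by `∧`, `∨`, `∃w`, `∀w`. -/
inductive FO (σ : Signature) : Type
  | ell : FO σ
  | eq : Tm σ → Tm σ → FO σ
  | ne : Tm σ → Tm σ → FO σ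
  | patom : σ.P → TmList σ → FO σ
  | npatom : σ.P → TmList σ → FO σ
  | conj : FO σ → FO σ → FO σ
  | disj : FO σ → FO σ → FO σ
  | ex : σ.W → FO σ → FO σ
  | all : σ.W → FO σ → FO σ

def FO.hasNxt : FO σ → Bool
  | .ell => false
  | .eq t u | .ne t u => t.hasNxt || u.hasNxt
  | .patom _ ts | .npatom _ ts => ts.hasNxt
  | .conj ψ χ | .disj ψ χ => ψ.hasNxt || χ.hasNxt
  | .ex _ ψ | .all _ ψ => ψ.hasNxt

def FO.hasWnxt : FO σ → Bool
  | .ell => false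
  | .eq t u | .ne t u => t.hasWnxt || u.hasWnxt
  | .patom _ ts | .npatom _ ts => ts.hasWnxt
  | .conj ψ χ | .disj ψ χ => ψ.hasWnxt || χ.hasWnxt
  | .ex _ ψ | .all _ ψ => ψ.hasWnxt

/-- The free quantification variables of a first-order formula. -/
def FO.freeW : FO σ → Set σ.W
  | .ell => ∅
  | .eq t u | .ne t u => t.wvars ∪ u.wvars
  | .patom _ ts | .npatom _ ts => ts.wvars
  | .conj ψ χ | .disj ψ χ => ψ.freeW ∪ χ.freeW
  | .ex w ψ | .all w ψ => ψ.freeW \ {w}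

/-- Number of quantifier occurrences in a first-order formula. -/
def FO.qcount : FO σ → ℕ
  | .ell | .eq _ _ | .ne _ _ | .patom _ _ | .npatom _ _ => 0
  | .conj ψ χ | .disj ψ χ => ψ.qcount + χ.qcount
  | .ex _ ψ | .all _ ψ => ψ.qcount + 1

/-- LTLfMT formulas: `⊤`, first-order formulas, `∧`, `∨`,
tomorrow `X`, weak tomorrow `wX`, until `U`, release `R`. -/
inductive Frm (σ : Signature) : Type
  | tt : Frm σ
  | fo : FO σ → Frm σ
  | conj : Frm σ → Frm σ → Frm σ
  | disj : Frm σ → Frm σ → Frm σ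
  | nxt : Frm σ → Frm σ
  | wnxt : Frm σ → Frm σ
  | untl : Frm σ → Frm σ → Frm σ
  | rel : Frm σ → Frm σ → Frm σ

def Frm.hasNxt : Frm σ → Bool
  | .tt => false
  | .fo C => C.hasNxt
  | .conj ψ χ | .disj ψ χ | .untl ψ χ | .rel ψ χ => ψ.hasNxt || χ.hasNxt
  | .nxt ψ | .wnxt ψ => ψ.hasNxt

def Frm.hasWnxt : Frm σ → Bool
  | .tt => false
  | .fo C => C.hasWnxt
  | .conj ψ χ | .disj ψ χ | .untl ψ χ | .rel ψ χ => ψ.hasWnxt || χ.hasWnxt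
  | .nxt ψ | .wnxt ψ => ψ.hasWnxt

/-- A `Σ`-structure: a (nonempty) carrier together with interpretations of the
function and predicate symbols.  Equality atoms are interpreted by identity. -/
structure Struc (σ : Signature) : Type 1 where
  D : Type
  dne : Nonempty D
  fI : σ.F → List D → D
  pI : σ.P → List D → Prop

/-- A class of structures, representing (the models of) a `Σ`-theory `T`. -/
def Theory (σ : Signature) : Type 1 := Struc σ → Prop

mutual
/-- Evaluation of a term, where `a` interprets the current-state variables,
`a'` the next-state (`◦v`, `~◦v`) variables and `g` is the environment for
quantification variables. -/
def Tm.eval (M : Struc σ) (a a' : σ.V → M.D) (g : σ.W → M.D) : Tm σ → M.D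
  | .var v => a v
  | .qvar w => g w
  | .nxt v => a' v
  | .wnxt v => a' v
  | .app f ts => M.fI f (TmList.eval M a a' g ts)
def TmList.eval (M : Struc σ) (a a' : σ.V → M.D) (g : σ.W → M.D) : TmList σ → List M.D
  | .nil => []
  | .cons t ts => Tm.eval M a a' g t :: TmList.eval M a a' g ts
end

/-- Updating an environment at a quantification variable. -/
def updW {D : Type} (g : σ.W → D) (w : σ.W) (d : D) : σ.W → D :=
  fun w' => if w' = w then d else g w'

/-- The guard implementing the `L` operator on atoms: when `useL` is set, an
atom containing a `◦`-term becomes `ℓ ∧ A`, an atom containing a `~◦`-term (but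
no `◦`-term) becomes `ℓ → A`. -/
def lguard (ellv : Prop) (useL : Bool) (hn hw : Bool) (base : Prop) : Prop :=
  if useL then (if hn then ellv ∧ base else if hw then ellv → base else base) else base

/-- Satisfaction of a first-order formula in `M` w.r.t. a current-state
assignment `a`, a next-state assignment `a'` and environment `g`; `ellv` is the
truth value of the fresh predicate `ℓ`, and `useL` tells whether the `L`
operator is (semantically) applied to the formula. -/
def FO.sat (M : Struc σ) (ellv : Prop) (useL : Bool) (a a' : σ.V → M.D) (g : σ.W → M.D) :
    FO σ → Prop
  | .ell => ellv
  | .eq t u =>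
      lguard ellv useL (t.hasNxt || u.hasNxt) (t.hasWnxt || u.hasWnxt)
        (Tm.eval M a a' g t = Tm.eval M a a' g u)
  | .ne t u =>
      ¬ lguard ellv useL (t.hasNxt || u.hasNxt) (t.hasWnxt || u.hasWnxt)
        (Tm.eval M a a' g t = Tm.eval M a a' g u)
  | .patom p ts =>
      lguard ellv useL ts.hasNxt ts.hasWnxt (M.pI p (TmList.eval M a a' g ts))
  | .npatom p ts =>
      ¬ lguard ellv useL ts.hasNxt ts.hasWnxt (M.pI p (TmList.eval M a a' g ts))
  | .conj ψ χ => FO.sat M ellv useL a a' g ψ ∧ FO.sat M ellv useL a a' g χ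
  | .disj ψ χ => FO.sat M ellv useL a a' g ψ ∨ FO.sat M ellv useL a a' g χ
  | .ex w ψ => ∃ d : M.D, FO.sat M ellv useL a a' (updW g w d) ψ
  | .all w ψ => ∀ d : M.D, FO.sat M ellv useL a a' (updW g w d) ψ

/-- A run `σ = (M, ⟨α₀, …, α_{n−1}⟩)`: a structure together with a finite
sequence of state variable assignments. -/
structure Run (σ : Signature) : Type 1 where
  M : Struc σ
  xs : List (σ.V → M.D)

/-- Satisfaction of a first-order formula at instant `i` of a run: at non-last
instants `◦v`/`~◦v` are evaluated by `α_{i+1}`; at the last instant atoms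
containing `◦` are false and atoms containing `~◦` but not `◦` hold vacuously. -/
def Run.satFO (r : Run σ) (i : ℕ) (C : FO σ) : Prop :=
  ∃ a ∈ r.xs[i]?,
    ((∃ b ∈ r.xs[i+1]?, ∀ g : σ.W → r.M.D, FO.sat r.M False false a b g C) ∨
     (r.xs[i+1]? = none ∧ ∀ g : σ.W → r.M.D, FO.sat r.M False true a a g C))

/-- Finite-trace satisfaction `σ ⊨ⁱ φ` of LTLfMT formulas. -/
def Run.sat (r : Run σ) : ℕ → Frm σ → Prop
  | _, .tt => True
  | i, .fo C => r.satFO i C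
  | i, .conj ψ χ => r.sat i ψ ∧ r.sat i χ
  | i, .disj ψ χ => r.sat i ψ ∨ r.sat i χ
  | i, .nxt ψ => i + 1 < r.xs.length ∧ r.sat (i+1) ψ
  | i, .wnxt ψ => i = r.xs.length - 1 ∨ r.sat (i+1) ψ
  | i, .untl ψ χ =>
      ∃ j, i ≤ j ∧ j < r.xs.length ∧ r.sat j χ ∧ ∀ k, i ≤ k → k < j → r.sat k ψ
  | i, .rel ψ χ =>
      (∀ j, i ≤ j → j < r.xs.length → r.sat j χ) ∨
      ∃ j, i ≤ j ∧ j < r.xs.length ∧ r.sat j ψ ∧ ∀ k, i ≤ k → k ≤ j → r.sat k χ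

/-- `T`-satisfiability of an LTLfMT formula: some run whose structure is a
model of `T` satisfies it at position `0`. -/
def Satisfiable (T : Theory σ) (φ : Frm σ) : Prop :=
  ∃ r : Run σ, T r.M ∧ 0 < r.xs.length ∧ r.sat 0 φ


/-! ### Constraint sequences, `Ω` and history constraints -/

/-- The set of first-order formulas in a label / atom. -/
def FOpart (Γ : Set (Frm σ)) : Set (FO σ) := {C | Frm.fo C ∈ Γ}

/-- The constraint sequence of a sequence of labels / atoms. -/
def consOf (πs : List (Set (Frm σ))) : List (Set (FO σ)) := πs.map FOpart

/-- `SeqSat M ℓ α⃗ C⃗` renders satisfaction of the stepped conjunction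
`Ω(C⃗) = ⋀_{i<m-1} Cᵢ^{(i)} ∧ L(C_{m-1})^{(m-1)}` by the structure `M`, the
truth value `ℓ` for the fresh predicate, and the sequence of state variable
assignments `α⃗ = ⟨α₀, …, α_m⟩` interpreting the indexed variable copies. -/
def SeqSat (M : Struc σ) (ellv : Prop) (as : List (σ.V → M.D)) (Cs : List (Set (FO σ))) :
    Prop :=
  as.length = Cs.length + 1 ∧
  ∀ i : ℕ, ∀ a ∈ as[i]?, ∀ b ∈ as[i+1]?, ∀ C ∈ Cs.getD i ∅, ∀ g : σ.W → M.D,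
    FO.sat M ellv (decide (i + 1 = Cs.length)) a b g C

/-- `Ω(C⃗)` is `T`-satisfiable (all symbols not constrained by `T`, including
`ℓ`, being free/uninterpreted). -/
def OmegaSat (T : Theory σ) (Cs : List (Set (FO σ))) : Prop :=
  ∃ M : Struc σ, T M ∧ ∃ (ellv : Prop) (as : List (σ.V → M.D)), SeqSat M ellv as Cs

/-- Semantics of the history constraint
`h(C⃗) = (∃V⁰…V^{m−1}. Ω(C⃗))[V^m / V]` at the assignment `α` (for the empty
sequence, `h = ⊤`). -/
def hSat (M : Struc σ) (ellv : Prop) (α : σ.V → M.D) (Cs : List (Set (FO σ))) : Prop :=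
  Cs = [] ∨ ∃ as : List (σ.V → M.D), SeqSat M ellv (as ++ [α]) Cs

/-- `T`-entailment between history constraints: `h(C⃗) ⊨_T h(C⃗')`. -/
def hEntails (T : Theory σ) (Cs Cs' : List (Set (FO σ))) : Prop :=
  ∀ M : Struc σ, T M → ∀ (ellv : Prop) (α : σ.V → M.D),
    hSat M ellv α Cs → hSat M ellv α Cs'

/-- `T`-equivalence between history constraints. -/
def hEquiv (T : Theory σ) (Cs Cs' : List (Set (FO σ))) : Prop :=
  ∀ M : Struc σ, T M → ∀ (ellv : Prop) (α : σ.V → M.D),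
    hSat M ellv α Cs ↔ hSat M ellv α Cs'

/-! ### The closure, expansion rules and the tableau -/

/-- The closure of `φ`: the smallest set containing all subformulas of `φ`,
together with `X(ψ U χ)` for `ψ U χ` in the closure and `wX(ψ R χ)` for
`ψ R χ` in the closure. -/
inductive closure (φ : Frm σ) : Frm σ → Prop
  | refl : closure φ φ
  | conj_l {ψ χ} : closure φ (.conj ψ χ) → closure φ ψ
  | conj_r {ψ χ} : closure φ (.conj ψ χ) → closure φ χ
  | disj_l {ψ χ} : closure φ (.disj ψ χ) → closure φ ψ
  | disj_r {ψ χ} : closure φ (.disj ψ χ) → closure φ χ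
  | nxt {ψ} : closure φ (.nxt ψ) → closure φ ψ
  | wnxt {ψ} : closure φ (.wnxt ψ) → closure φ ψ
  | untl_l {ψ χ} : closure φ (.untl ψ χ) → closure φ ψ
  | untl_r {ψ χ} : closure φ (.untl ψ χ) → closure φ χ
  | rel_l {ψ χ} : closure φ (.rel ψ χ) → closure φ ψ
  | rel_r {ψ χ} : closure φ (.rel ψ χ) → closure φ χ
  | untl_x {ψ χ} : closure φ (.untl ψ χ) → closure φ (.nxt (.untl ψ χ))
  | rel_wx {ψ χ} : closure φ (.rel ψ χ) → closure φ (.wnxt (.rel ψ χ))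

/-- The formulas to which an expansion rule applies. -/
def Frm.expandable : Frm σ → Prop
  | .conj _ _ | .disj _ _ | .untl _ _ | .rel _ _ => True
  | _ => False

/-- `Child ψ S` holds iff `S` is one of the expansion sets `Γ₁(ψ)`, `Γ₂(ψ)`
of the expansion rules DISJUNCTION, CONJUNCTION, UNTIL, RELEASE. -/
inductive Child : Frm σ → Set (Frm σ) → Prop
  | disj_l {ψ χ : Frm σ} : Child (.disj ψ χ) {ψ}
  | disj_r {ψ χ : Frm σ} : Child (.disj ψ χ) {χ}
  | conj {ψ χ : Frm σ} : Child (.conj ψ χ) {ψ, χ}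
  | untl_l {ψ χ : Frm σ} : Child (.untl ψ χ) {χ}
  | untl_r {ψ χ : Frm σ} : Child (.untl ψ χ) {ψ, .nxt (.untl ψ χ)}
  | rel_l {ψ χ : Frm σ} : Child (.rel ψ χ) {ψ, χ}
  | rel_r {ψ χ : Frm σ} : Child (.rel ψ χ) {χ, .wnxt (.rel ψ χ)}

/-- A node label is poised if no expansion rule is applicable to it. -/
def Poised (Γ : Set (Frm σ)) : Prop := ∀ ψ ∈ Γ, ¬ ψ.expandable

/-- The label produced by the STEP rule. -/
def stepLabel (Γ : Set (Frm σ)) : Set (Frm σ) :=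
  {ψ | Frm.nxt ψ ∈ Γ ∨ Frm.wnxt ψ ∈ Γ}

/-- The EMPTY rule for a branch with poised-node labels `πs`: the last poised
node contains no tomorrow-rooted formulas, and `Ω ∧ ¬ℓ` is `T`-satisfiable. -/
def EmptyRule (T : Theory σ) (πs : List (Set (Frm σ))) : Prop :=
  (∀ ψ : Frm σ, Frm.nxt ψ ∉ πs.getD (πs.length - 1) ∅) ∧
  ∃ M : Struc σ, T M ∧ ∃ as : List (σ.V → M.D), SeqSat M False as (consOf πs)

/-- The CONTRADICTION rule: `Ω` is unsatisfiable modulo `T` (with all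
remaining symbols, including `ℓ`, uninterpreted). -/
def ContraRule (T : Theory σ) (πs : List (Set (Frm σ))) : Prop :=
  ¬ OmegaSat T (consOf πs)

/-- The PRUNE rule for a branch with poised-node labels `πs = ⟨π₀,…,π_{m−1}⟩`:
`Γ(πᵢ) = Γ(π_{m−1})` for some `i < m−1` and `h(π⃗) ⊨_T h(π⃗_{≤i})`. -/
def PruneRule (T : Theory σ) (πs : List (Set (Frm σ))) : Prop :=
  ∃ i, i + 2 ≤ πs.length ∧ πs.getD i ∅ = πs.getD (πs.length - 1) ∅ ∧
    hEntails T (consOf πs) (consOf (πs.take (i+1)))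

/-- A strategy selecting, from the history of labels from the root and the
current label, the formula to which an expansion rule is applied; distinct
strategies yield the distinct tableaux for a formula. -/
def Strategy (σ : Signature) : Type :=
  List (Set (Frm σ)) → Set (Frm σ) → Frm σ

/-- A strategy is valid if on non-poised labels it picks an expandable member. -/
def ValidStrategy (st : Strategy σ) : Prop :=
  ∀ hist Γ, ¬ Poised Γ → st hist Γ ∈ Γ ∧ (st hist Γ).expandable

/-- `TPath T st prune φ πs hist Γ`: in the tableau for `φ` (built according to
strategy `st`, and augmented with the PRUNE rule if `prune = true`) there is a
node with label `Γ`, whose sequence of ancestor labels is `hist` and whose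
sequence of poised ancestor labels is `πs`.  The root is labelled `{φ}`; an
expansion rule is applied whenever possible; the STEP rule applies to poised
nodes only when the branch is not ready to be accepted (EMPTY) or rejected
(CONTRADICTION, and PRUNE when enabled). -/
inductive TPath (T : Theory σ) (st : Strategy σ) (prune : Bool) (φ : Frm σ) :
    List (Set (Frm σ)) → List (Set (Frm σ)) → Set (Frm σ) → Prop
  | root : TPath T st prune φ [] [] {φ}
  | expand {πs hist Γ S} :
      TPath T st prune φ πs hist Γ → ¬ Poised Γ →
      st hist Γ ∈ Γ → Child (st hist Γ) S →
      TPath T st prune φ πs (hist ++ [Γ]) ((Γ \ {st hist Γ}) ∪ S)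
  | step {πs hist Γ} :
      TPath T st prune φ πs hist Γ → Poised Γ →
      ¬ EmptyRule T (πs ++ [Γ]) →
      ¬ ContraRule T (πs ++ [Γ]) →
      (prune = true → ¬ PruneRule T (πs ++ [Γ])) →
      TPath T st prune φ (πs ++ [Γ]) (hist ++ [Γ]) (stepLabel Γ)

/-- The tableau contains an accepted branch: some branch ends in a poised node
on which the EMPTY rule triggers. -/
def HasAcceptedBranch (T : Theory σ) (st : Strategy σ) (prune : Bool) (φ : Frm σ) : Prop :=
  ∃ πs hist Γ, TPath T st prune φ πs hist Γ ∧ Poised Γ ∧ EmptyRule T (πs ++ [Γ])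

/-- The set of nodes of the tableau (a node is determined by its ancestor
history together with its label). -/
def TableauNodes (T : Theory σ) (st : Strategy σ) (prune : Bool) (φ : Frm σ) :
    Set (List (Set (Frm σ)) × Set (Frm σ)) :=
  {p | ∃ πs, TPath T st prune φ πs p.1 p.2}

/-! ### Atoms and pre-models -/

/-- Semantic entailment (modulo `T`) of a formula from a set of formulas, over
runs and instants. -/
def Entails (T : Theory σ) (S : Set (Frm σ)) (ψ : Frm σ) : Prop :=
  ∀ r : Run σ, T r.M → ∀ i, i < r.xs.length →
    (∀ χ ∈ S, r.sat i χ) → r.sat i ψ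

/-- The atom of a node label: all formulas of the closure of `φ` entailed by it. -/
def atomOf (T : Theory σ) (φ : Frm σ) (Γ : Set (Frm σ)) : Set (Frm σ) :=
  {ψ | closure φ ψ ∧ Entails T Γ ψ}

/-- An atom `Δ` for `φ`: a subset of the closure of `φ` whose first-order part
is `T`-satisfiable, which contains one of the expansion sets of each of its
expandable members, and which is closed under logical deduction as far as the
closure is concerned. -/
structure IsAtom (T : Theory σ) (φ : Frm σ) (Δ : Set (Frm σ)) : Prop where
  sub : ∀ ψ ∈ Δ, closure φ ψ
  fo_sat : ∃ M : Struc σ, T M ∧ ∃ a a' : σ.V → M.D,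
    ∀ C ∈ FOpart Δ, ∀ g : σ.W → M.D, FO.sat M True false a a' g C
  exp : ∀ ψ ∈ Δ, ψ.expandable → ∃ S, Child ψ S ∧ S ⊆ Δ
  ded : ∀ ψ, closure φ ψ → Entails T Δ ψ → ψ ∈ Δ

/-- The conditions of a pre-model except minimality. -/
structure IsPreModelAux (T : Theory σ) (φ : Frm σ) (Δs : List (Set (Frm σ))) : Prop where
  ne : Δs ≠ []
  atoms : ∀ Δ ∈ Δs, IsAtom T φ Δ
  head : φ ∈ Δs.getD 0 ∅
  last_noNxt : ∀ C ∈ FOpart (Δs.getD (Δs.length - 1) ∅), C.hasNxt = false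
  nxt_prop : ∀ i (ψ : Frm σ), Frm.nxt ψ ∈ Δs.getD i ∅ →
    i + 2 ≤ Δs.length ∧ ψ ∈ Δs.getD (i+1) ∅
  wnxt_prop : ∀ i (ψ : Frm σ), Frm.wnxt ψ ∈ Δs.getD i ∅ →
    i = Δs.length - 1 ∨ ψ ∈ Δs.getD (i+1) ∅
  untl_ful : ∀ i (ψ χ : Frm σ), i < Δs.length → Frm.untl ψ χ ∈ Δs.getD i ∅ →
    ∃ j, i ≤ j ∧ j < Δs.length ∧ χ ∈ Δs.getD j ∅ ∧
      ∀ k, i ≤ k → k < j → ψ ∈ Δs.getD k ∅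
  rel_ful : ∀ i (ψ χ : Frm σ), i < Δs.length → Frm.rel ψ χ ∈ Δs.getD i ∅ →
    (∀ j, i ≤ j → j < Δs.length → χ ∈ Δs.getD j ∅) ∨
    ∃ j, i ≤ j ∧ j < Δs.length ∧ ψ ∈ Δs.getD j ∅ ∧
      ∀ k, i ≤ k → k ≤ j → χ ∈ Δs.getD k ∅

/-- A pre-model for `φ`: a sequence of atoms satisfying the propagation and
fulfillment conditions, all of whose members are minimal with respect to set
inclusion. -/
def IsPreModel (T : Theory σ) (φ : Frm σ) (Δs : List (Set (Frm σ))) : Prop :=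
  IsPreModelAux T φ Δs ∧
  ∀ Δs' : List (Set (Frm σ)), IsPreModelAux T φ Δs' → Δs'.length = Δs.length →
    (∀ i, Δs'.getD i ∅ ⊆ Δs.getD i ∅) → Δs' = Δs

/-- A pre-model is satisfiable if `Ω(⟨F(Δ₀),…,F(Δ_{n−1})⟩) ∧ ¬ℓ` is
`T`-satisfiable. -/
def SatPreModel (T : Theory σ) (Δs : List (Set (Frm σ))) : Prop :=
  ∃ M : Struc σ, T M ∧ ∃ as : List (σ.V → M.D), SeqSat M False as (consOf Δs)

/-! ### Finite memory and decidability (as existence of decision functions) -/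

/-- The history set of `φ`: the (semantic renderings of the) history
constraints `h(Δ⃗_{≤i})` over all pre-models `Δ⃗` of `φ`. -/
def HistorySet (T : Theory σ) (φ : Frm σ) : Set (List (Set (FO σ))) :=
  {Cs | ∃ Δs i, IsPreModel T φ Δs ∧ i < Δs.length ∧ Cs = consOf (Δs.take (i+1))}

/-- `φ` has finite memory: its history set is finite up to `T`-equivalence. -/
def FiniteMemory (T : Theory σ) (φ : Frm σ) : Prop :=
  ∃ S : Set (List (Set (FO σ))), S.Finite ∧
    ∀ Cs ∈ HistorySet T φ, ∃ Cs' ∈ S, hEquiv T Cs Cs'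

/-- Decidability of the underlying theory, rendered as the existence of
effective tests for `T`-satisfiability of the constraint formulas `Ω` and for
`T`-entailment between history constraints. -/
def TheoryDecidable (T : Theory σ) : Prop :=
  (∃ dec : List (Set (FO σ)) → Bool, ∀ Cs, dec Cs = true ↔ OmegaSat T Cs) ∧
  (∃ dece : List (Set (FO σ)) → List (Set (FO σ)) → Bool,
    ∀ Cs Cs', dece Cs Cs' = true ↔ hEntails T Cs Cs')



/-! ### Auxiliary lemmas for the proof -/

section Aux

lemma lguard_useL_false (e : Prop) (hn hw : Bool) (b : Prop) :
    lguard e false hn hw b = b := by simp [lguard]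

lemma lguard_true_iff (u : Bool) (hn hw : Bool) (b : Prop) :
    lguard True u hn hw b ↔ b := by
  cases u <;> cases hn <;> cases hw <;> simp [lguard]

mutual
theorem Tm.eval_indep (M : Struc σ) (a b b' : σ.V → M.D) (g : σ.W → M.D) :
    ∀ t : Tm σ, t.hasNxt = false → t.hasWnxt = false →
      Tm.eval M a b g t = Tm.eval M a b' g t
  | .var _, _, _ => rfl
  | .qvar _, _, _ => rfl
  | .nxt _, h, _ => by simp [Tm.hasNxt] at h
  | .wnxt _, _, h => by simp [Tm.hasWnxt] at h
  | .app f ts, h, h' => by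
      have := TmList.eval_indep M a b b' g ts (by simpa [Tm.hasNxt] using h)
        (by simpa [Tm.hasWnxt] using h')
      simp [Tm.eval, this]
theorem TmList.eval_indep (M : Struc σ) (a b b' : σ.V → M.D) (g : σ.W → M.D) :
    ∀ ts : TmList σ, ts.hasNxt = false → ts.hasWnxt = false →
      TmList.eval M a b g ts = TmList.eval M a b' g ts
  | .nil, _, _ => rfl
  | .cons t ts, h, h' => by
      simp [TmList.hasNxt] at h
      simp [TmList.hasWnxt] at h'
      simp [TmList.eval, Tm.eval_indep M a b b' g t h.1 h'.1,
        TmList.eval_indep M a b b' g ts h.2 h'.2]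
end

/-- With `ℓ = ⊥` and the `L` guard applied, a first-order formula does not
depend on the next-state assignment. -/
theorem satIndep (M : Struc σ) (a b b' : σ.V → M.D) :
    ∀ C : FO σ, ∀ g : σ.W → M.D,
      FO.sat M False true a b g C → FO.sat M False true a b' g C := by
  intro C
  induction C with
  | ell => intro g h; exact h
  | eq t u =>
      intro g h
      simp only [FO.sat] at h ⊢
      rcases hTn : t.hasNxt <;> rcases hUn : u.hasNxt <;>
        rcases hTw : t.hasWnxt <;> rcases hUw : u.hasWnxt <;>
        simp [hTn, hUn, hTw, hUw, lguard] at h ⊢ <;>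
        rw [← Tm.eval_indep M a b b' g t hTn hTw, ← Tm.eval_indep M a b b' g u hUn hUw] <;>
        exact h
  | ne t u =>
      intro g h
      simp only [FO.sat] at h ⊢
      rcases hTn : t.hasNxt <;> rcases hUn : u.hasNxt <;>
        rcases hTw : t.hasWnxt <;> rcases hUw : u.hasWnxt <;>
        simp [hTn, hUn, hTw, hUw, lguard] at h ⊢ <;>
        rw [← Tm.eval_indep M a b b' g t hTn hTw, ← Tm.eval_indep M a b b' g u hUn hUw] <;>
        exact h
  | patom p ts =>
      intro g h
      simp only [FO.sat] at h ⊢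
      rcases hTn : ts.hasNxt <;> rcases hTw : ts.hasWnxt <;>
        simp [hTn, hTw, lguard] at h ⊢ <;>
        rw [← TmList.eval_indep M a b b' g ts hTn hTw] <;> exact h
  | npatom p ts =>
      intro g h
      simp only [FO.sat] at h ⊢
      rcases hTn : ts.hasNxt <;> rcases hTw : ts.hasWnxt <;>
        simp [hTn, hTw, lguard] at h ⊢ <;>
        rw [← TmList.eval_indep M a b b' g ts hTn hTw] <;> exact h
  | conj ψ χ ihψ ihχ => intro g h; exact ⟨ihψ g h.1, ihχ g h.2⟩
  | disj ψ χ ihψ ihχ =>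
      intro g h
      rcases h with h | h
      · exact Or.inl (ihψ g h)
      · exact Or.inr (ihχ g h)
  | ex w ψ ih => intro g h; obtain ⟨d, hd⟩ := h; exact ⟨d, ih _ hd⟩
  | all w ψ ih => intro g h; exact fun d => ih _ (h d)

/-- Plain satisfaction implies satisfaction with `ℓ = ⊤` and any guard mode. -/
theorem satMono (M : Struc σ) (a b : σ.V → M.D) (u : Bool) :
    ∀ C : FO σ, ∀ g : σ.W → M.D,
      FO.sat M False false a b g C → FO.sat M True u a b g C := by
  intro C
  induction C with
  | ell => intro g _; trivial
  | eq t u' => intro g h; simpa only [FO.sat, lguard_true_iff, lguard_useL_false] using h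
  | ne t u' => intro g h; simpa only [FO.sat, lguard_true_iff, lguard_useL_false] using h
  | patom p ts => intro g h; simpa only [FO.sat, lguard_true_iff, lguard_useL_false] using h
  | npatom p ts => intro g h; simpa only [FO.sat, lguard_true_iff, lguard_useL_false] using h
  | conj ψ χ ihψ ihχ => intro g h; exact ⟨ihψ g h.1, ihχ g h.2⟩
  | disj ψ χ ihψ ihχ =>
      intro g h
      rcases h with h | h
      · exact Or.inl (ihψ g h)
      · exact Or.inr (ihχ g h)
  | ex w ψ ih => intro g h; obtain ⟨d, hd⟩ := h; exact ⟨d, ih _ hd⟩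
  | all w ψ ih => intro g h; exact fun d => ih _ (h d)

end Aux

section Lists

variable {α : Type*}

lemma getD_of_le (l : List α) (d : α) {j : ℕ} (h : l.length ≤ j) : l.getD j d = d := by
  simp [List.getD_eq_getElem?_getD, List.getElem?_eq_none h]

lemma getD_append_left (l l' : List α) (d : α) {j : ℕ} (h : j < l.length) :
    (l ++ l').getD j d = l.getD j d := by
  simp [List.getD_eq_getElem?_getD, List.getElem?_append_left h]

lemma getD_append_length (l : List α) (x d : α) :
    (l ++ [x]).getD l.length d = x := by
  simp [List.getD_eq_getElem?_getD]

lemma mem_getD_lt {β : Type*} [Membership β α] [EmptyCollection α]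
    (l : List α) {j : ℕ} {s : β} (h : s ∈ l.getD j (∅ : α))
    (he : ∀ t : β, t ∉ (∅ : α)) : j < l.length := by
  by_contra hj
  rw [getD_of_le l _ (le_of_not_gt hj)] at h
  exact he s h

end Lists

section RunLemmas

lemma consOf_length (πs : List (Set (Frm σ))) : (consOf πs).length = πs.length := by
  simp [consOf]

lemma consOf_getD (πs : List (Set (Frm σ))) {j : ℕ} (h : j < πs.length) :
    (consOf πs).getD j ∅ = FOpart (πs.getD j ∅) := by
  simp [consOf, List.getD_eq_getElem?_getD, List.getElem?_eq_getElem h,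
    List.getElem?_eq_getElem (by simpa [consOf] using h : j < (πs.map FOpart).length)]

lemma mem_consOf_getD {πs : List (Set (Frm σ))} {j : ℕ} (h : j < πs.length) {C : FO σ} :
    C ∈ (consOf πs).getD j ∅ ↔ Frm.fo C ∈ πs.getD j ∅ := by
  rw [consOf_getD _ h]; exact Iff.rfl

/-- Truth of a child set implies truth of the expanded formula. -/
lemma child_sat {r : Run σ} {i : ℕ} {e : Frm σ} {S : Set (Frm σ)}
    (hc : Child e S) (hS : ∀ ψ ∈ S, r.sat i ψ) (hi : i < r.xs.length) :
    r.sat i e := by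
  cases hc with
  | @disj_l ψ χ => exact Or.inl (hS ψ rfl)
  | @disj_r ψ χ => exact Or.inr (hS χ rfl)
  | @conj ψ χ => exact ⟨hS ψ (Or.inl rfl), hS χ (Or.inr rfl)⟩
  | @untl_l ψ χ =>
      exact ⟨i, le_refl i, hi, hS χ rfl, fun k hk hk' => absurd hk (by omega)⟩
  | @untl_r ψ χ =>
      obtain ⟨hlen, j, hij, hj, hχ, hmin⟩ := hS (.nxt (.untl ψ χ)) (Or.inr rfl)
      refine ⟨j, by omega, hj, hχ, fun k hk hkj => ?_⟩
      rcases Nat.lt_or_ge k (i+1) with hk' | hk'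
      · have : k = i := by omega
        subst this; exact hS ψ (Or.inl rfl)
      · exact hmin k hk' hkj
  | @rel_l ψ χ =>
      exact Or.inr ⟨i, le_refl i, hi, hS ψ (Or.inl rfl), fun k hk hk' => by
        have : k = i := by omega
        subst this; exact hS χ (Or.inr rfl)⟩
  | @rel_r ψ χ =>
      have hχ := hS χ (Or.inl rfl)
      have hw := hS (.wnxt (.rel ψ χ)) (Or.inr rfl)
      rcases hw with hw | hw
      · exact Or.inl fun j hj hj' => by
          have : j = i := by omega
          subst this; exact hχ
      · rcases hw with hall | ⟨j, hij, hjl, hψ, hχs⟩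
        · refine Or.inl fun j hj hj' => ?_
          rcases Nat.lt_or_ge j (i+1) with h' | h'
          · have : j = i := by omega
            subst this; exact hχ
          · exact hall j h' hj'
        · refine Or.inr ⟨j, by omega, hjl, hψ, fun k hk hk' => ?_⟩
          rcases Nat.lt_or_ge k (i+1) with h' | h'
          · have : k = i := by omega
            subst this; exact hχ
          · exact hχs k h' hk'

/-- A satisfied expandable formula has a satisfied child set. -/
lemma child_exists {r : Run σ} {i : ℕ} {e : Frm σ}
    (he : e.expandable) (hs : r.sat i e) (hi : i < r.xs.length) :
    ∃ S, Child e S ∧ ∀ ψ ∈ S, r.sat i ψ := by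
  cases e with
  | conj ψ χ =>
      exact ⟨{ψ, χ}, Child.conj, by rintro x (rfl | rfl); exacts [hs.1, hs.2]⟩
  | disj ψ χ =>
      rcases hs with h | h
      · exact ⟨{ψ}, Child.disj_l, by rintro x rfl; exact h⟩
      · exact ⟨{χ}, Child.disj_r, by rintro x rfl; exact h⟩
  | untl ψ χ =>
      obtain ⟨j, hij, hjl, hχ, hmin⟩ := hs
      rcases Nat.eq_or_lt_of_le hij with rfl | hlt
      · exact ⟨{χ}, Child.untl_l, by rintro x rfl; exact hχ⟩
      · refine ⟨{ψ, .nxt (.untl ψ χ)}, Child.untl_r, ?_⟩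
        rintro x (rfl | rfl)
        · exact hmin i (le_refl i) hlt
        · exact ⟨by omega, j, by omega, hjl, hχ, fun k hk hk' => hmin k (by omega) hk'⟩
  | rel ψ χ =>
      rcases hs with hall | ⟨j, hij, hjl, hψ, hχs⟩
      · refine ⟨{χ, .wnxt (.rel ψ χ)}, Child.rel_r, ?_⟩
        rintro x (rfl | rfl)
        · exact hall i (le_refl i) hi
        · by_cases hl : i = r.xs.length - 1
          · exact Or.inl hl
          · exact Or.inr (Or.inl fun j hj hj' => hall j (by omega) hj')
      · rcases Nat.eq_or_lt_of_le hij with rfl | hlt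
        · exact ⟨{ψ, χ}, Child.rel_l, by
            rintro x (rfl | rfl)
            exacts [hψ, hχs i (le_refl i) (le_refl i)]⟩
        · refine ⟨{χ, .wnxt (.rel ψ χ)}, Child.rel_r, ?_⟩
          rintro x (rfl | rfl)
          · exact hχs i (le_refl i) (le_of_lt hlt)
          · exact Or.inr (Or.inr ⟨j, by omega, hjl, hψ, fun k hk hk' => hχs k (by omega) hk'⟩)
  | tt => exact absurd he (by simp [Frm.expandable])
  | fo C => exact absurd he (by simp [Frm.expandable])
  | nxt χ => exact absurd he (by simp [Frm.expandable])
  | wnxt χ => exact absurd he (by simp [Frm.expandable])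

/-- Shape of the members of a poised label. -/
lemma poised_cases {Γ : Set (Frm σ)} (h : Poised Γ) {ψ : Frm σ} (hψ : ψ ∈ Γ) :
    ψ = .tt ∨ (∃ C, ψ = .fo C) ∨ (∃ χ, ψ = .nxt χ) ∨ (∃ χ, ψ = .wnxt χ) := by
  have he := h ψ hψ
  cases ψ with
  | tt => exact Or.inl rfl
  | fo C => exact Or.inr (Or.inl ⟨C, rfl⟩)
  | nxt χ => exact Or.inr (Or.inr (Or.inl ⟨χ, rfl⟩))
  | wnxt χ => exact Or.inr (Or.inr (Or.inr ⟨χ, rfl⟩))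
  | conj ψ χ => exact absurd trivial he
  | disj ψ χ => exact absurd trivial he
  | untl ψ χ => exact absurd trivial he
  | rel ψ χ => exact absurd trivial he

end RunLemmas

section SeqSatLemmas

/-- A run whose every instant satisfies the constraints yields a model of the
stepped conjunction `Ω` with `ℓ := ⊤`, provided a further instant exists. -/
lemma seqSat_of_run_lt (r : Run σ) (Cs : List (Set (FO σ)))
    (h : Cs.length < r.xs.length)
    (htrue : ∀ j C, C ∈ Cs.getD j ∅ → r.satFO j C) :
    SeqSat r.M True (r.xs.take (Cs.length + 1)) Cs := by
  constructor
  · simp; omega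
  · intro i a ha b hb C hC g
    have hi : i < Cs.length := mem_getD_lt Cs hC (fun t => Set.notMem_empty t)
    have hxi : (r.xs.take (Cs.length + 1))[i]? = r.xs[i]? := by
      rw [List.getElem?_take]; simp [Nat.lt_succ_of_lt hi]
    have hxi1 : (r.xs.take (Cs.length + 1))[i+1]? = r.xs[i+1]? := by
      rw [List.getElem?_take]; simp [Nat.succ_lt_succ hi]
    rw [hxi] at ha
    rw [hxi1] at hb
    obtain ⟨a', ha', hrest⟩ := htrue i C hC
    have haa : a' = a := by
      rw [Option.mem_def] at ha ha'
      rw [ha] at ha'; exact (Option.some_injective _ ha').symm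
    subst haa
    rcases hrest with ⟨b', hb', hsat⟩ | ⟨hnone, _⟩
    · have hbb : b' = b := by
        rw [Option.mem_def] at hb hb'
        rw [hb] at hb'; exact (Option.some_injective _ hb').symm
      subst hbb
      exact satMono r.M a' b' _ C g (hsat g)
    · rw [Option.mem_def, hnone] at hb; exact absurd hb (by simp)

/-- A run whose every instant satisfies the constraints, the last one in the
`L`-guarded sense, yields a model of `Ω ∧ ¬ℓ`. -/
lemma seqSat_of_run_eq (r : Run σ) (Cs : List (Set (FO σ)))
    (hlen : Cs.length = r.xs.length) (h0 : 0 < r.xs.length)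
    (htrue : ∀ j C, C ∈ Cs.getD j ∅ → r.satFO j C) :
    SeqSat r.M False
      (r.xs ++ [r.xs.getD (r.xs.length - 1) (fun _ => Classical.choice r.M.dne)]) Cs := by
  constructor
  · simp; omega
  · intro i a ha b hb C hC g
    have hi : i < Cs.length := mem_getD_lt Cs hC (fun t => Set.notMem_empty t)
    have hi' : i < r.xs.length := by omega
    have hxi : (r.xs ++ [r.xs.getD (r.xs.length - 1) (fun _ => Classical.choice r.M.dne)])[i]?
        = r.xs[i]? := List.getElem?_append_left hi'
    rw [Option.mem_def, hxi] at ha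
    obtain ⟨a', ha', hrest⟩ := htrue i C hC
    rw [Option.mem_def] at ha'
    have haa : a' = a := by rw [ha] at ha'; exact (Option.some_injective _ ha').symm
    subst haa
    rcases Nat.lt_or_ge (i+1) r.xs.length with hlt | hge
    · have hdec : decide (i + 1 = Cs.length) = false := by
        apply decide_eq_false; omega
      rw [hdec]
      have hxi1 : (r.xs ++ [r.xs.getD (r.xs.length - 1) (fun _ => Classical.choice r.M.dne)])[i+1]?
          = r.xs[i+1]? := List.getElem?_append_left hlt
      rw [Option.mem_def, hxi1] at hb
      rcases hrest with ⟨b', hb', hsat⟩ | ⟨hnone, _⟩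
      · rw [Option.mem_def] at hb'
        have hbb : b' = b := by rw [hb] at hb'; exact (Option.some_injective _ hb').symm
        subst hbb
        exact hsat g
      · rw [hnone] at hb; exact absurd hb (by simp)
    · have hieq : i + 1 = r.xs.length := by omega
      have hdec : decide (i + 1 = Cs.length) = true := by
        apply decide_eq_true; omega
      rw [hdec]
      rcases hrest with ⟨b', hb', _⟩ | ⟨_, hsat⟩
      · rw [Option.mem_def, List.getElem?_eq_none (by omega)] at hb'
        exact absurd hb' (by simp)
      · -- b is the appended duplicate of the last assignment, i.e. `a'`
        have hi2 : i = r.xs.length - 1 := by omega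
        have hxi1 : (r.xs ++ [r.xs.getD (r.xs.length - 1) (fun _ => Classical.choice r.M.dne)])[i+1]?
            = some (r.xs.getD (r.xs.length - 1) (fun _ => Classical.choice r.M.dne)) := by
          rw [hieq]; exact List.getElem?_concat_length
        rw [Option.mem_def, hxi1] at hb
        have hgd : r.xs.getD (r.xs.length - 1) (fun _ => Classical.choice r.M.dne) = a' := by
          rw [← hi2, List.getD_eq_getElem?_getD, ha']; rfl
        rw [hgd] at hb
        obtain rfl := Option.some_injective _ hb
        exact hsat g

end SeqSatLemmas

section Soundness

/-- Soundness along a tableau branch: a run fulfilling the first-order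
constraints of the poised prefix and the current label satisfies `φ`. -/
lemma sound {T : Theory σ} {st : Strategy σ} {φ : Frm σ}
    {πs hist : List (Set (Frm σ))} {Γ : Set (Frm σ)}
    (hp : TPath T st false φ πs hist Γ) :
    ∀ r : Run σ, πs.length < r.xs.length →
      (∀ j C, Frm.fo C ∈ πs.getD j ∅ → r.satFO j C) →
      (∀ ψ ∈ Γ, r.sat πs.length ψ) → r.sat 0 φ := by
  induction hp with
  | root => intro r _ _ hΓ; exact hΓ φ rfl
  | @expand πs hist Γ S hp hnp hmem hch ih =>
      intro r hlen hFO hΓ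
      refine ih r hlen hFO fun ψ hψ => ?_
      by_cases he : ψ = st hist Γ
      · subst he
        exact child_sat hch (fun χ hχ => hΓ χ (Or.inr hχ)) hlen
      · exact hΓ ψ (Or.inl ⟨hψ, he⟩)
  | @step πs hist Γ hp hpoise hne hnc hnpr ih =>
      intro r hlen hFO hΓ'
      have hL : (πs ++ [Γ]).length = πs.length + 1 := by simp
      rw [hL] at hlen hΓ'
      refine ih r (by omega) (fun j C hj => ?_) fun ψ hψ => ?_
      · have hjlt : j < πs.length := mem_getD_lt πs hj (fun t => Set.notMem_empty t)
        exact hFO j C (by rwa [getD_append_left _ _ _ hjlt])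
      · rcases poised_cases hpoise hψ with rfl | ⟨C, rfl⟩ | ⟨χ, rfl⟩ | ⟨χ, rfl⟩
        · trivial
        · have := hFO πs.length C (by rwa [getD_append_length])
          simpa only [Run.sat] using this
        · exact ⟨hlen, hΓ' χ (Or.inl hψ)⟩
        · exact Or.inr (hΓ' χ (Or.inr hψ))

/-- An accepted branch yields satisfiability. -/
lemma accepted_sound {T : Theory σ} {st : Strategy σ} {φ : Frm σ}
    (h : HasAcceptedBranch T st false φ) : Satisfiable T φ := by
  obtain ⟨πs, hist, Γ, hp, hpoise, hnoX, M, hT, as, hASlen, hsat⟩ := h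
  rw [consOf_length] at hASlen
  set πsΓ := πs ++ [Γ] with hπsΓ
  have hm : πsΓ.length = πs.length + 1 := by simp [hπsΓ]
  set r : Run σ := ⟨M, as.take πsΓ.length⟩ with hr
  have hrlen : r.xs.length = πsΓ.length := by
    show (as.take πsΓ.length).length = πsΓ.length
    rw [List.length_take]; omega
  have hFO : ∀ j C, Frm.fo C ∈ πsΓ.getD j ∅ → r.satFO j C := by
    intro j C hC
    have hj : j < πsΓ.length := mem_getD_lt πsΓ hC (fun t => Set.notMem_empty t)
    have hC' : C ∈ (consOf πsΓ).getD j ∅ := (mem_consOf_getD hj).mpr hC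
    have hj1 : j + 1 < as.length := by omega
    have hj0 : j < as.length := by omega
    have key := hsat j (as[j]'hj0) (List.getElem?_eq_getElem hj0)
      (as[j+1]'hj1) (List.getElem?_eq_getElem hj1) C hC'
    have hxj : r.xs[j]? = some (as[j]'hj0) := by
      show (as.take πsΓ.length)[j]? = _
      rw [List.getElem?_take]
      simp [hj, List.getElem?_eq_getElem hj0]
    rcases Nat.lt_or_ge (j+1) πsΓ.length with hlt | hge
    · have hdec : decide (j + 1 = (consOf πsΓ).length) = false := by
        apply decide_eq_false; rw [consOf_length]; omega
      rw [hdec] at key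
      have hxj1 : r.xs[j+1]? = some (as[j+1]'hj1) := by
        show (as.take πsΓ.length)[j+1]? = _
        rw [List.getElem?_take]
        simp [hlt, List.getElem?_eq_getElem hj1]
      exact ⟨as[j]'hj0, hxj, Or.inl ⟨as[j+1]'hj1, hxj1, fun g => key g⟩⟩
    · have hjeq : j + 1 = πsΓ.length := by omega
      have hdec : decide (j + 1 = (consOf πsΓ).length) = true := by
        apply decide_eq_true; rw [consOf_length]; omega
      rw [hdec] at key
      have hxnone : r.xs[j+1]? = none := by
        apply List.getElem?_eq_none
        rw [hrlen]; omega
      exact ⟨as[j]'hj0, hxj, Or.inr ⟨hxnone, fun g =>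
        satIndep M (as[j]'hj0) (as[j+1]'hj1) (as[j]'hj0) C g (key g)⟩⟩
  have hΓtruth : ∀ ψ ∈ Γ, r.sat πs.length ψ := by
    intro ψ hψ
    rcases poised_cases hpoise hψ with rfl | ⟨C, rfl⟩ | ⟨χ, rfl⟩ | ⟨χ, rfl⟩
    · trivial
    · have := hFO πs.length C (by rwa [hπsΓ, getD_append_length])
      simpa only [Run.sat] using this
    · refine absurd ?_ (hnoX χ)
      rw [hm]
      simpa [hπsΓ, getD_append_length] using hψ
    · exact Or.inl (by omega)
  refine ⟨r, hT, by omega, ?_⟩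
  exact sound hp r (by omega) (fun j C hj => hFO j C (by
    have hjlt : j < πs.length := mem_getD_lt πs hj (fun t => Set.notMem_empty t)
    rwa [hπsΓ, getD_append_left _ _ _ hjlt])) hΓtruth

end Soundness

section Completeness

/-- Expansion weight of a formula. -/
def Frm.wt : Frm σ → ℕ
  | .conj ψ χ => ψ.wt + χ.wt + 1
  | .disj ψ χ => ψ.wt + χ.wt + 1
  | .untl ψ χ => ψ.wt + χ.wt + 1
  | .rel ψ χ => ψ.wt + χ.wt + 1
  | _ => 0

lemma child_finite {e : Frm σ} {S : Set (Frm σ)} (h : Child e S) : S.Finite := by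
  cases h <;> first
    | exact Set.finite_singleton _
    | exact (Set.finite_singleton _).insert _

lemma pair_wt_le (ψ χ : Frm σ) (h : ({ψ, χ} : Set (Frm σ)).Finite) :
    ∑ x ∈ h.toFinset, Frm.wt x ≤ ψ.wt + χ.wt := by
  classical
  by_cases hpc : ψ = χ
  · subst hpc
    have : h.toFinset = {ψ} := by
      ext x; simp [Set.Finite.mem_toFinset]
    rw [this, Finset.sum_singleton]; omega
  · have : h.toFinset = {ψ, χ} := by
      ext x; simp [Set.Finite.mem_toFinset]
    rw [this, Finset.sum_insert (by simpa using hpc), Finset.sum_singleton]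

lemma singleton_wt (ψ : Frm σ) (h : ({ψ} : Set (Frm σ)).Finite) :
    ∑ x ∈ h.toFinset, Frm.wt x = ψ.wt := by
  have : h.toFinset = {ψ} := by ext x; simp [Set.Finite.mem_toFinset]
  rw [this, Finset.sum_singleton]

lemma child_wt {e : Frm σ} {S : Set (Frm σ)} (h : Child e S) (hS : S.Finite) :
    (∑ ψ ∈ hS.toFinset, Frm.wt ψ) + 1 ≤ e.wt := by
  cases h with
  | @disj_l ψ χ => rw [singleton_wt]; simp [Frm.wt]
  | @disj_r ψ χ => rw [singleton_wt]; simp [Frm.wt]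
  | @conj ψ χ => have := pair_wt_le ψ χ hS; simp [Frm.wt]; omega
  | @untl_l ψ χ => rw [singleton_wt]; simp [Frm.wt]
  | @untl_r ψ χ =>
      have := pair_wt_le ψ (.nxt (.untl ψ χ)) hS
      simp only [Frm.wt] at this ⊢; omega
  | @rel_l ψ χ => have := pair_wt_le ψ χ hS; simp [Frm.wt]; omega
  | @rel_r ψ χ =>
      have := pair_wt_le χ (.wnxt (.rel ψ χ)) hS
      simp only [Frm.wt] at this ⊢; omega

lemma expand_wt {Γ S : Set (Frm σ)} {e : Frm σ} (hΓ : Γ.Finite) (he : e ∈ Γ)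
    (hch : Child e S) (hfin' : ((Γ \ {e}) ∪ S).Finite) :
    ∑ ψ ∈ hfin'.toFinset, Frm.wt ψ < ∑ ψ ∈ hΓ.toFinset, Frm.wt ψ := by
  classical
  have hS : S.Finite := child_finite hch
  have hsub : hfin'.toFinset ⊆ (hΓ.toFinset.erase e) ∪ hS.toFinset := by
    intro x hx
    simp only [Set.Finite.mem_toFinset, Set.mem_union, Set.mem_diff,
      Set.mem_singleton_iff, Finset.mem_union, Finset.mem_erase,
      Set.Finite.mem_toFinset] at hx ⊢
    tauto
  calc ∑ ψ ∈ hfin'.toFinset, Frm.wt ψ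
      ≤ ∑ ψ ∈ (hΓ.toFinset.erase e) ∪ hS.toFinset, Frm.wt ψ :=
        Finset.sum_le_sum_of_subset hsub
    _ ≤ (∑ ψ ∈ hΓ.toFinset.erase e, Frm.wt ψ) + ∑ ψ ∈ hS.toFinset, Frm.wt ψ := by
        rw [← Finset.union_sdiff_self_eq_union, Finset.sum_union Finset.disjoint_sdiff]
        have h2 : ∑ ψ ∈ hS.toFinset \ hΓ.toFinset.erase e, Frm.wt ψ
            ≤ ∑ ψ ∈ hS.toFinset, Frm.wt ψ :=
          Finset.sum_le_sum_of_subset Finset.sdiff_subset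
        omega
    _ < (∑ ψ ∈ hΓ.toFinset.erase e, Frm.wt ψ) + e.wt := by
        have := child_wt hch hS; omega
    _ = ∑ ψ ∈ hΓ.toFinset, Frm.wt ψ :=
        Finset.sum_erase_add _ _ (hΓ.mem_toFinset.mpr he)

/-- Unwrapping of (weak) tomorrow operators, for the finiteness of `stepLabel`. -/
def unwrapNxt : Frm σ → Frm σ
  | .nxt χ => χ
  | .wnxt χ => χ
  | ψ => ψ

lemma stepLabel_finite {Γ : Set (Frm σ)} (h : Γ.Finite) : (stepLabel Γ).Finite := by
  apply (h.image unwrapNxt).subset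
  rintro ψ (h1 | h1)
  · exact ⟨_, h1, rfl⟩
  · exact ⟨_, h1, rfl⟩

/-- Expansion rules applied exhaustively reach a poised node, preserving truth. -/
lemma expand_to_poised {T : Theory σ} {st : Strategy σ} {φ : Frm σ}
    (hst : ValidStrategy st) (r : Run σ) :
    ∀ k : ℕ, ∀ Γ : Set (Frm σ), ∀ hist πs : List (Set (Frm σ)),
      TPath T st false φ πs hist Γ →
      ∀ hfin : Γ.Finite, (∑ ψ ∈ hfin.toFinset, Frm.wt ψ) ≤ k →
      πs.length < r.xs.length →
      (∀ ψ ∈ Γ, r.sat πs.length ψ) →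
      ∃ hist' Γ', TPath T st false φ πs hist' Γ' ∧ Poised Γ' ∧ Γ'.Finite ∧
        (∀ ψ ∈ Γ', r.sat πs.length ψ) := by
  intro k
  induction k using Nat.strong_induction_on with
  | _ k ih =>
    intro Γ hist πs hp hfin hwt hlen hΓ
    by_cases hpo : Poised Γ
    · exact ⟨hist, Γ, hp, hpo, hfin, hΓ⟩
    · obtain ⟨hmem, hexp⟩ := hst hist Γ hpo
      obtain ⟨S, hch, hS⟩ := child_exists hexp (hΓ _ hmem) hlen
      have hfin' : ((Γ \ {st hist Γ}) ∪ S).Finite :=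
        (hfin.diff).union (child_finite hch)
      have hlt := expand_wt hfin hmem hch hfin'
      have hp' := TPath.expand hp hpo hmem hch
      have hΓ' : ∀ ψ ∈ (Γ \ {st hist Γ}) ∪ S, r.sat πs.length ψ := by
        rintro ψ (⟨h1, _⟩ | h1)
        · exact hΓ ψ h1
        · exact hS ψ h1
      exact ih (∑ ψ ∈ hfin'.toFinset, Frm.wt ψ) (by omega) _ _ _ hp' hfin'
        le_rfl hlen hΓ'

lemma truth_append {r : Run σ} {πs : List (Set (Frm σ))} {Γ : Set (Frm σ)}
    (hπs : ∀ j ψ, ψ ∈ πs.getD j ∅ → r.sat j ψ)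
    (hΓ : ∀ ψ ∈ Γ, r.sat πs.length ψ) :
    ∀ j ψ, ψ ∈ (πs ++ [Γ]).getD j ∅ → r.sat j ψ := by
  intro j ψ hmem
  have hj : j < πs.length + 1 := by
    have := mem_getD_lt (πs ++ [Γ]) hmem (fun t => Set.notMem_empty t)
    simpa using this
  rcases Nat.lt_or_ge j πs.length with h' | h'
  · exact hπs j ψ (by rwa [getD_append_left _ _ _ h'] at hmem)
  · have hje : j = πs.length := by omega
    subst hje
    exact hΓ ψ (by rwa [getD_append_length] at hmem)

lemma satFO_of_truth (r : Run σ) (l : List (Set (Frm σ)))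
    (h : ∀ j ψ, ψ ∈ l.getD j ∅ → r.sat j ψ) :
    ∀ j C, C ∈ (consOf l).getD j ∅ → r.satFO j C := by
  intro j C hC
  have hj : j < l.length := by
    have := mem_getD_lt (consOf l) hC (fun t => Set.notMem_empty t)
    simpa [consOf_length] using this
  have := h j (.fo C) ((mem_consOf_getD hj).mp hC)
  simpa only [Run.sat] using this

/-- At the last instant of a satisfying run the EMPTY rule triggers. -/
lemma empty_at_end {T : Theory σ} (r : Run σ) (hT : T r.M)
    (πs : List (Set (Frm σ))) (Γ : Set (Frm σ))
    (htr : ∀ j ψ, ψ ∈ (πs ++ [Γ]).getD j ∅ → r.sat j ψ)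
    (hlenEq : πs.length + 1 = r.xs.length) :
    EmptyRule T (πs ++ [Γ]) := by
  constructor
  · intro ψ hmem
    have hidx : (πs ++ [Γ]).length - 1 = πs.length := by simp
    rw [hidx, getD_append_length] at hmem
    have := htr πs.length (.nxt ψ) (by rw [getD_append_length]; exact hmem)
    obtain ⟨hlt, -⟩ := this
    omega
  · refine ⟨r.M, hT, _, seqSat_of_run_eq r _ ?_ (by omega) (satFO_of_truth r _ htr)⟩
    rw [consOf_length]
    simpa using hlenEq

/-- Descent along a satisfying run to an accepted leaf. -/
lemma descend {T : Theory σ} {st : Strategy σ} {φ : Frm σ}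
    (hst : ValidStrategy st) (r : Run σ) (hT : T r.M) :
    ∀ d : ℕ, ∀ πs hist : List (Set (Frm σ)), ∀ Γ : Set (Frm σ),
      TPath T st false φ πs hist Γ → Γ.Finite →
      πs.length < r.xs.length → r.xs.length - 1 - πs.length ≤ d →
      (∀ j ψ, ψ ∈ πs.getD j ∅ → r.sat j ψ) →
      (∀ ψ ∈ Γ, r.sat πs.length ψ) →
      HasAcceptedBranch T st false φ := by
  intro d
  induction d with
  | zero =>
      intro πs hist Γ hp hfin hlen hd hπs hΓ
      obtain ⟨hist', Γ', hp', hpo', hfin', hΓ'⟩ :=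
        expand_to_poised hst r _ Γ hist πs hp hfin le_rfl hlen hΓ
      have htr := truth_append hπs hΓ'
      exact ⟨πs, hist', Γ', hp', hpo', empty_at_end r hT πs Γ' htr (by omega)⟩
  | succ d ih =>
      intro πs hist Γ hp hfin hlen hd hπs hΓ
      obtain ⟨hist', Γ', hp', hpo', hfin', hΓ'⟩ :=
        expand_to_poised hst r _ Γ hist πs hp hfin le_rfl hlen hΓ
      have htr := truth_append hπs hΓ'
      by_cases hem : EmptyRule T (πs ++ [Γ'])
      · exact ⟨πs, hist', Γ', hp', hpo', hem⟩
      · have hlt : πs.length + 1 < r.xs.length := by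
          rcases Nat.lt_or_ge (πs.length + 1) r.xs.length with h' | h'
          · exact h'
          · exact absurd (empty_at_end r hT πs Γ' htr (by omega)) hem
        have hnc : ¬ ContraRule T (πs ++ [Γ']) := by
          intro hc
          refine hc ⟨r.M, hT, True, _, seqSat_of_run_lt r _ ?_ (satFO_of_truth r _ htr)⟩
          rw [consOf_length]
          simpa using hlt
        have hstep := TPath.step hp' hpo' hem hnc (fun h => nomatch h)
        have hL : (πs ++ [Γ']).length = πs.length + 1 := by simp
        refine ih (πs ++ [Γ']) (hist' ++ [Γ']) (stepLabel Γ') hstep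
          (stepLabel_finite hfin') (by omega) (by omega) htr ?_
        rintro ψ (h1 | h1)
        · rw [hL]
          exact (hΓ' _ h1).2
        · rw [hL]
          rcases hΓ' _ h1 with heq | hs
          · omega
          · exact hs

end Completeness

/-- A (one-pass tree-shaped) tableau for an LTLfMT formula
`φ` (without the PRUNE rule) contains an accepted branch if and only if `φ`
is satisfiable. -/
theorem tableau_accepted_iff_satisfiable (σ : Signature) (T : Theory σ)
    (φ : Frm σ) (st : Strategy σ) (hst : ValidStrategy st) :
    HasAcceptedBranch T st false φ ↔ Satisfiable T φ := by
  constructor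
  · exact accepted_sound
  · rintro ⟨r, hT, hlen0, hsat⟩
    refine descend hst r hT (r.xs.length - 1) [] [] {φ} TPath.root
      (Set.finite_singleton φ) hlen0 (by omega) ?_ ?_
    · intro j ψ h
      rw [getD_of_le ([] : List (Set (Frm σ))) ∅ (by simp)] at h
      exact absurd h (Set.notMem_empty ψ)
    · intro ψ h
      exact h ▸ hsat

end LTLfMT
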